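/- arXiv:1305.4667 — 2 statements merged into one kernel-verified Lean document; each statement's English description precedes it below -/
import Mathlib

section
/- In the ring R = ℤ[w,z]/(w² - 2w, wz - 2w), an element of the principal ideal (z^k) is a ℤ-multiple of w if and only if it is of the form λ·2^k·w for some λ ∈ ℤ. Consequently, if 2^m·w ∈ (z^k) with m ≥ 0, then m ≥ k. -/
open MvPolynomial

noncomputable def SWFIdeal : Ideal (MvPolynomial (Fin 2) ℤ) :=
  Ideal.span {(X 0 : MvPolynomial (Fin 2) ℤ) ^ 2 - 2 * X 0,
    (X 0 : MvPolynomial (Fin 2) ℤ) * X 1 - 2 * X 0}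

abbrev SWFRing : Type := MvPolynomial (Fin 2) ℤ ⧸ SWFIdeal

noncomputable def w : SWFRing := Ideal.Quotient.mk SWFIdeal (X 0)
noncomputable def z : SWFRing := Ideal.Quotient.mk SWFIdeal (X 1)

/-!
Every element of `R` is `P(z) + c·w` with `P ∈ ℤ[X]`, `c ∈ ℤ`, and `w·r = ε(r)·w` where
`ε : R → ℤ` sends `w, z ↦ 2`. The ring map `R → ℤ[X]` killing `w` detects the `P`-part, so
`c·w = z^k·y` forces `y = c'·w`, whence `c·w = c'·z^k·w = c'·2^k·w`. Applying `ε` to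
`2^m·w = λ·2^k·w` gives `2^k ∣ 2^m`.
-/

namespace SWFRing

section Lift

variable {S : Type*} [CommRing S] (a b : S) (haa : a * a = 2 * a) (hab : a * b = 2 * a)

noncomputable def lift : SWFRing →+* S :=
  Ideal.Quotient.lift SWFIdeal (eval₂Hom (Int.castRingHom S) ![a, b]) fun p hp => by
    have hker : SWFIdeal ≤ RingHom.ker (eval₂Hom (Int.castRingHom S) ![a, b]) := by
      rw [SWFIdeal, Ideal.span_le]
      rintro p (rfl | rfl) <;> simp [RingHom.mem_ker, sq, haa, hab]
    exact RingHom.mem_ker.mp (hker hp)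

@[simp]
lemma lift_w : lift a b haa hab w = a := by
  rw [lift, w, Ideal.Quotient.lift_mk]
  simp

@[simp]
lemma lift_z : lift a b haa hab z = b := by
  rw [lift, z, Ideal.Quotient.lift_mk]
  simp

end Lift

lemma w_mul_w : w * w = 2 * w := by
  have h : Ideal.Quotient.mk SWFIdeal ((X 0 : MvPolynomial (Fin 2) ℤ) ^ 2 - 2 * X 0) = 0 :=
    Ideal.Quotient.eq_zero_iff_mem.mpr (Ideal.subset_span (by simp))
  rw [← sub_eq_zero]
  simpa only [map_sub, map_mul, map_pow, map_ofNat, sq, w] using h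

lemma w_mul_z : w * z = 2 * w := by
  have h : Ideal.Quotient.mk SWFIdeal ((X 0 : MvPolynomial (Fin 2) ℤ) * X 1 - 2 * X 0) = 0 :=
    Ideal.Quotient.eq_zero_iff_mem.mpr (Ideal.subset_span (by simp))
  rw [← sub_eq_zero]
  simpa only [map_sub, map_mul, map_ofNat, w, z] using h

@[elab_as_elim]
lemma induction_on {P : SWFRing → Prop} (r : SWFRing) (intCast : ∀ a : ℤ, P a)
    (add : ∀ r s, P r → P s → P (r + s)) (mul_w : ∀ r, P r → P (r * w))
    (mul_z : ∀ r, P r → P (r * z)) : P r := by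
  obtain ⟨p, rfl⟩ := Ideal.Quotient.mk_surjective r
  induction p using MvPolynomial.induction_on with
  | C a => simpa using intCast a
  | add p q hp hq => simpa using add _ _ hp hq
  | mul_X p i hp =>
    rw [map_mul]
    fin_cases i
    · exact mul_w _ hp
    · exact mul_z _ hp

noncomputable def toPolynomial : SWFRing →+* Polynomial ℤ :=
  lift 0 Polynomial.X (by simp) (by simp)

noncomputable def evalTwo : SWFRing →+* ℤ :=
  lift 2 2 (by norm_num) (by norm_num)

noncomputable def ofPolynomial : Polynomial ℤ →ₐ[ℤ] SWFRing :=
  Polynomial.aeval z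

@[simp]
lemma toPolynomial_w : toPolynomial w = 0 := lift_w ..

@[simp]
lemma toPolynomial_z : toPolynomial z = Polynomial.X := lift_z ..

@[simp]
lemma evalTwo_w : evalTwo w = 2 := lift_w ..

@[simp]
lemma evalTwo_z : evalTwo z = 2 := lift_z ..

@[simp]
lemma toPolynomial_ofPolynomial (q : Polynomial ℤ) : toPolynomial (ofPolynomial q) = q := by
  have h : toPolynomial.toIntAlgHom.comp ofPolynomial = AlgHom.id ℤ _ :=
    Polynomial.algHom_ext (show toPolynomial (Polynomial.aeval z .X) = .X by simp)
  exact DFunLike.congr_fun h q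

lemma w_mul (r : SWFRing) : w * r = evalTwo r * w := by
  induction r using induction_on with
  | intCast a => simp [mul_comm]
  | add r s hr hs => simp [mul_add, hr, hs, add_mul]
  | mul_w r hr => rw [← mul_assoc, hr, mul_assoc, w_mul_w, map_mul, evalTwo_w]; push_cast; ring
  | mul_z r hr => rw [← mul_assoc, hr, mul_assoc, w_mul_z, map_mul, evalTwo_z]; push_cast; ring

lemma z_pow_mul_w (k : ℕ) : z ^ k * w = 2 ^ k * w := by
  rw [mul_comm, w_mul]
  simp

lemma exists_eq_ofPolynomial_add_intCast_mul_w (r : SWFRing) :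
    ∃ c : ℤ, r = ofPolynomial (toPolynomial r) + c * w := by
  induction r using induction_on with
  | intCast a => exact ⟨0, by simp⟩
  | add r s hr hs =>
    obtain ⟨c, hc⟩ := hr
    obtain ⟨d, hd⟩ := hs
    refine ⟨c + d, ?_⟩
    rw [map_add, map_add, hc, hd]
    simp only [map_add, toPolynomial_ofPolynomial, map_mul, map_intCast, toPolynomial_w, mul_zero,
      add_zero, Int.cast_add]
    ring
  | mul_w r hr => exact ⟨evalTwo r, by simp [mul_comm r, w_mul]⟩
  | mul_z r hr =>
    obtain ⟨c, hc⟩ := hr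
    refine ⟨2 * c, ?_⟩
    conv_lhs => rw [hc]
    simp [ofPolynomial, add_mul, mul_assoc, w_mul_z, mul_left_comm]

lemma exists_eq_intCast_mul_w_of_toPolynomial_eq_zero {r : SWFRing} (hr : toPolynomial r = 0) :
    ∃ c : ℤ, r = c * w := by
  simpa [hr] using exists_eq_ofPolynomial_add_intCast_mul_w r

lemma exists_eq_intCast_mul_two_pow_mul_w {k : ℕ} {x : SWFRing} (hx : x ∈ Ideal.span {z ^ k})
    (hx₀ : toPolynomial x = 0) : ∃ c : ℤ, x = c * 2 ^ k * w := by
  obtain ⟨y, rfl⟩ := Ideal.mem_span_singleton'.mp hx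
  have hy : toPolynomial y = 0 := by simpa using hx₀
  obtain ⟨c, rfl⟩ := exists_eq_intCast_mul_w_of_toPolynomial_eq_zero hy
  exact ⟨c, by rw [mul_assoc, mul_comm w, z_pow_mul_w, mul_assoc]⟩

lemma le_of_two_pow_mul_w_eq {k m : ℕ} {c : ℤ} (h : (2 : SWFRing) ^ m * w = c * 2 ^ k * w) :
    k ≤ m := by
  have h2 := congrArg evalTwo h
  simp only [map_mul, map_pow, map_ofNat, map_intCast, evalTwo_w, Int.cast_id] at h2
  have hdvd : (2 : ℤ) ^ k ∣ 2 ^ m := ⟨c, by linarith⟩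
  exact (pow_dvd_pow_iff two_ne_zero (by norm_num [Int.isUnit_iff])).mp hdvd

end SWFRing

/-- In `R = ℤ[w,z]/(w² - 2w, wz - 2w)`, an element of `(z^k)` is a `ℤ`-multiple of `w`
iff it is of the form `λ·2^k·w`; consequently `2^m·w ∈ (z^k)` forces `m ≥ k`. -/
theorem stmt_5 (k : ℕ) :
    (∀ x ∈ Ideal.span {z ^ k}, (∃ c : ℤ, x = (c : SWFRing) * w) ↔
      (∃ lam : ℤ, x = (lam : SWFRing) * 2 ^ k * w)) ∧
    (∀ m : ℕ, (2 : SWFRing) ^ m * w ∈ Ideal.span {z ^ k} → m ≥ k) := by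
  refine ⟨fun x hx => ⟨?_, ?_⟩, fun m hm => ?_⟩
  · rintro ⟨c, rfl⟩
    exact SWFRing.exists_eq_intCast_mul_two_pow_mul_w hx (by simp)
  · rintro ⟨lam, rfl⟩
    exact ⟨lam * 2 ^ k, by push_cast; ring⟩
  · obtain ⟨c, hc⟩ := SWFRing.exists_eq_intCast_mul_two_pow_mul_w hm (by simp)
    exact SWFRing.le_of_two_pow_mul_w_eq hc
end

section
/- In R = ℤ[w,z]/(w² - 2w, wz - 2w), for the augmentation ideal 𝔞 = (w, z) we have k(𝔞) = 1, where k(I) = min{k ≥ 0 : ∃x ∈ I, wx = 2^k·w}. In particular 1 ∉ (w,z), but w ∈ (w,z) satisfies w·w = 2w. -/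
open MvPolynomial

/-- `k(I) = min {k ≥ 0 : ∃ x ∈ I, wx = 2^k·w}`. -/
noncomputable def kIdeal (I : Ideal SWFRing) : ℕ :=
  sInf {k : ℕ | ∃ x ∈ I, w * x = 2 ^ k * w}

/-! The relations vanish at `w = z = 2`, so evaluation there is a ring map `R → ℤ` sending
`(w, z)` into `2ℤ` and `w` to `2`. If `w * x = w` with `x ∈ (w, z)`, it would give
`2 * x(2,2) = 2` with `x(2,2)` even, which is absurd; and `x = w` gives `w * x = 2 * w`. -/

lemma SWFIdeal_le_ker_eval_two : SWFIdeal ≤ RingHom.ker (eval fun _ : Fin 2 => (2 : ℤ)) := by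
  refine Ideal.span_le.mpr ?_
  rintro p (rfl | rfl) <;> simp [RingHom.mem_ker]

noncomputable def evalTwo : SWFRing →+* ℤ :=
  Ideal.Quotient.lift SWFIdeal (eval fun _ => 2) fun _ ha => SWFIdeal_le_ker_eval_two ha

@[simp] lemma evalTwo_w : evalTwo w = 2 :=
  (Ideal.Quotient.lift_mk _ _ _).trans (eval_X _)

@[simp] lemma evalTwo_z : evalTwo z = 2 :=
  (Ideal.Quotient.lift_mk _ _ _).trans (eval_X _)

lemma w_mul_self : w * w = 2 * w := by
  have h : Ideal.Quotient.mk SWFIdeal ((X 0 : MvPolynomial (Fin 2) ℤ) ^ 2 - 2 * X 0) = 0 :=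
    Ideal.Quotient.eq_zero_iff_mem.mpr (Ideal.subset_span (Or.inl rfl))
  rw [map_sub, sub_eq_zero, map_pow, map_mul, map_ofNat] at h
  rw [← sq]
  exact h

lemma two_dvd_evalTwo_of_mem_span_w_z {x : SWFRing} (hx : x ∈ Ideal.span {w, z}) :
    (2 : ℤ) ∣ evalTwo x := by
  have hle : (Ideal.span {w, z}).map evalTwo ≤ Ideal.span {2} := by
    rw [Ideal.map_span]
    refine Ideal.span_le.mpr ?_
    rintro p ⟨q, (rfl | rfl), rfl⟩ <;> simp
  exact Ideal.mem_span_singleton.mp (hle (Ideal.mem_map_of_mem _ hx))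

lemma w_mul_ne_w_of_mem_span_w_z {x : SWFRing} (hx : x ∈ Ideal.span {w, z}) : w * x ≠ w := by
  intro h
  have h2 : 2 * evalTwo x = 2 := by simpa using congrArg evalTwo h
  have hx1 : evalTwo x = 1 := by omega
  have hodd : ¬ (2 : ℤ) ∣ evalTwo x := by rw [hx1]; norm_num
  exact hodd (two_dvd_evalTwo_of_mem_span_w_z hx)

/-- For the augmentation ideal `(w,z)` we have `k((w,z)) = 1`; in particular
`1 ∉ (w,z)` but `w ∈ (w,z)` satisfies `w·w = 2w`. -/
theorem stmt_10 :
    kIdeal (Ideal.span {w, z}) = 1 ∧ (1 : SWFRing) ∉ Ideal.span {w, z} ∧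
      w ∈ Ideal.span {w, z} ∧ w * w = 2 * w := by
  have hw : w ∈ Ideal.span {w, z} := Ideal.subset_span (Or.inl rfl)
  have h1 : 1 ∈ {k : ℕ | ∃ x ∈ Ideal.span {w, z}, w * x = 2 ^ k * w} :=
    ⟨w, hw, by rw [w_mul_self, pow_one]⟩
  have hk_le : kIdeal (Ideal.span {w, z}) ≤ 1 := Nat.sInf_le h1
  have hk_ne : kIdeal (Ideal.span {w, z}) ≠ 0 := by
    rw [kIdeal, Ne, Nat.sInf_eq_zero, not_or]
    refine ⟨fun ⟨x, hx, h⟩ => w_mul_ne_w_of_mem_span_w_z hx (by simpa using h), ?_⟩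
    exact Set.nonempty_iff_ne_empty.mp ⟨1, h1⟩
  refine ⟨by omega, fun h => w_mul_ne_w_of_mem_span_w_z h (mul_one w), hw, w_mul_self⟩
end
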